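/- Let k be a field and let k[x,y] be the polynomial ring in two variables over k. The product matrix [[1, 0], [−x², 1]] · [[1+xy, −y²], [x², 1−xy]] belongs to GL₂(k[x,y]) but does not belong to the subgroup E₂(k[x,y]) of GL₂(k[x,y]) generated by all elementary 2×2 matrices. -/

import Mathlib

open Matrix MvPolynomial

/-- The set of elementary 2×2 matrices (as elements of `GL₂ A`):
matrices of the form `E₁₂(a) = [[1,a],[0,1]]` or `E₂₁(a) = [[1,0],[a,1]]`. -/
def elemSet (A : Type*) [CommRing A] : Set (GL (Fin 2) A) :=
  {U | ∃ a : A, (U : Matrix (Fin 2) (Fin 2) A) = !![1, a; 0, 1] ∨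
      (U : Matrix (Fin 2) (Fin 2) A) = !![1, 0; a, 1]}

/-- `E₂(A)`: the subgroup of `GL₂(A)` generated by all elementary 2×2 matrices. -/
def E2 (A : Type*) [CommRing A] : Subgroup (GL (Fin 2) A) :=
  Subgroup.closure (elemSet A)

open MvPolynomial

namespace CohnAux

variable {σ K : Type*} [Field K]

theorem totalDegree_sup_degree (p : MvPolynomial σ K) :
    p.totalDegree = p.support.sup Finsupp.degree := rfl

theorem topComponent_ne_zero {p : MvPolynomial σ K} (hp : p ≠ 0) :
    homogeneousComponent p.totalDegree p ≠ 0 := by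
  obtain ⟨m, hm, hdeg⟩ := Finset.exists_mem_eq_sup p.support
    (support_nonempty.mpr hp) Finsupp.degree
  intro h0
  have := coeff_homogeneousComponent (n := p.totalDegree) (φ := p) m
  rw [h0, totalDegree_sup_degree, if_pos hdeg.symm] at this
  exact (mem_support_iff.mp hm) this.symm

theorem residual_totalDegree_lt {p : MvPolynomial σ K}
    (h : p - homogeneousComponent p.totalDegree p ≠ 0) :
    (p - homogeneousComponent p.totalDegree p).totalDegree < p.totalDegree := by
  set q := p - homogeneousComponent p.totalDegree p with hq
  have hmem : ∀ m ∈ q.support, Finsupp.degree m < p.totalDegree := by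
    intro m hm
    have hco : coeff m q ≠ 0 := mem_support_iff.mp hm
    have : coeff m q = coeff m p - coeff m (homogeneousComponent p.totalDegree p) := by
      simp [hq, coeff_sub]
    rw [coeff_homogeneousComponent] at this
    by_cases hd : Finsupp.degree m = p.totalDegree
    · rw [if_pos hd] at this; simp at this; exact absurd this hco
    · have hmp : m ∈ p.support := by
        rw [if_neg hd, sub_zero] at this
        exact mem_support_iff.mpr (this ▸ hco)
      have := Finset.le_sup (f := Finsupp.degree) hmp
      rw [← totalDegree_sup_degree] at this
      exact lt_of_le_of_ne this hd
  have hne : q.support.Nonempty := support_nonempty.mpr h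
  rw [totalDegree_sup_degree]
  obtain ⟨m, hm⟩ := hne
  exact Finset.sup_lt_iff (lt_of_le_of_lt (Nat.zero_le _) (hmem m hm)) |>.mpr hmem

theorem totalDegree_mul_eq {p q : MvPolynomial σ K} (hp : p ≠ 0) (hq : q ≠ 0) :
    (p * q).totalDegree = p.totalDegree + q.totalDegree := by
  refine le_antisymm (totalDegree_mul p q) ?_
  set a := p.totalDegree
  set b := q.totalDegree
  set P := homogeneousComponent a p with hP
  set Q := homogeneousComponent b q with hQ
  have hPh : P.IsHomogeneous a := homogeneousComponent_isHomogeneous a p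
  have hQh : Q.IsHomogeneous b := homogeneousComponent_isHomogeneous b q
  have hP0 : P ≠ 0 := topComponent_ne_zero hp
  have hQ0 : Q ≠ 0 := topComponent_ne_zero hq
  -- the top homogeneous component of p*q at degree a+b is P*Q
  have key : homogeneousComponent (a + b) (p * q) = P * Q := by
    have hsplit : p * q = P * Q + (P * (q - Q) + ((p - P) * Q + (p - P) * (q - Q))) := by
      ring
    have hlow : ∀ f g : MvPolynomial σ K, f.totalDegree < a + b →
        homogeneousComponent (a+b) f = 0 := fun f g h => homogeneousComponent_eq_zero _ f h
    have aux : ∀ f : MvPolynomial σ K, f.totalDegree < a + b ∨ f = 0 →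
        homogeneousComponent (a+b) f = 0 := by
      rintro f (h | rfl)
      · exact homogeneousComponent_eq_zero _ f h
      · simp
    have h1 : homogeneousComponent (a+b) (P * (q - Q)) = 0 := by
      apply aux
      by_cases h : P * (q - Q) = 0
      · exact Or.inr h
      · left
        have hq' : q - Q ≠ 0 := by rintro h'; rw [h'] at h; simp at h
        have : (q - Q).totalDegree < b := residual_totalDegree_lt hq'
        calc (P * (q - Q)).totalDegree ≤ P.totalDegree + (q - Q).totalDegree :=
              totalDegree_mul _ _
          _ ≤ a + (q - Q).totalDegree := by
              have := hPh.totalDegree_le; omega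
          _ < a + b := by omega
    have h2 : homogeneousComponent (a+b) ((p - P) * Q) = 0 := by
      apply aux
      by_cases h : (p - P) * Q = 0
      · exact Or.inr h
      · left
        have hp' : p - P ≠ 0 := by rintro h'; rw [h'] at h; simp at h
        have : (p - P).totalDegree < a := residual_totalDegree_lt hp'
        calc ((p - P) * Q).totalDegree ≤ (p - P).totalDegree + Q.totalDegree :=
              totalDegree_mul _ _
          _ ≤ (p - P).totalDegree + b := by
              have := hQh.totalDegree_le; omega
          _ < a + b := by omega
    have h3 : homogeneousComponent (a+b) ((p - P) * (q - Q)) = 0 := by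
      apply aux
      by_cases h : (p - P) * (q - Q) = 0
      · exact Or.inr h
      · left
        have hp' : p - P ≠ 0 := by rintro h'; rw [h'] at h; simp at h
        have hq' : q - Q ≠ 0 := by rintro h'; rw [h'] at h; simp at h
        have ha : (p - P).totalDegree < a := residual_totalDegree_lt hp'
        have hb : (q - Q).totalDegree < b := residual_totalDegree_lt hq'
        calc ((p - P) * (q - Q)).totalDegree
            ≤ (p - P).totalDegree + (q - Q).totalDegree := totalDegree_mul _ _
          _ < a + b := by omega
    have hPQ : homogeneousComponent (a+b) (P * Q) = P * Q := by
      have : P * Q ∈ homogeneousSubmodule σ K (a + b) :=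
        (mem_homogeneousSubmodule _ _).mpr (hPh.mul hQh)
      rw [homogeneousComponent_of_mem this, if_pos rfl]
    rw [hsplit]
    simp only [map_add, hPQ, h1, h2, h3, add_zero]
  have hPQ0 : P * Q ≠ 0 := mul_ne_zero hP0 hQ0
  by_contra hlt
  push_neg at hlt
  rw [homogeneousComponent_eq_zero _ _ hlt] at key
  exact hPQ0 key.symm

theorem eq_C_of_totalDegree_eq_zero {p : MvPolynomial σ K} (h : p.totalDegree = 0) :
    p = C (coeff 0 p) := by
  classical
  ext m
  by_cases hm : m = 0
  · subst hm; simp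
  · rw [coeff_C, if_neg (Ne.symm hm)]
    by_contra hc
    have hmem : m ∈ p.support := mem_support_iff.mpr hc
    have := Finset.le_sup (f := Finsupp.degree) hmem
    rw [← totalDegree_sup_degree, h, Nat.le_zero] at this
    apply hm
    ext i
    by_cases hi : i ∈ m.support
    · have : ∑ j ∈ m.support, m j = 0 := this
      have := Finset.sum_eq_zero_iff.mp this i hi
      simpa using this
    · simpa using Finsupp.notMem_support_iff.mp hi

theorem totalDegree_eq_zero_of_isUnit {p : MvPolynomial σ K} (h : IsUnit p) :
    p.totalDegree = 0 := by
  obtain ⟨u, rfl⟩ := h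
  have h1 : (u : MvPolynomial σ K) * ↑u⁻¹ = 1 := u.mul_inv
  have hu : (u : MvPolynomial σ K) ≠ 0 := u.ne_zero
  have hv : (↑u⁻¹ : MvPolynomial σ K) ≠ 0 := u⁻¹.ne_zero
  have := totalDegree_mul_eq hu hv
  rw [h1, totalDegree_one] at this
  omega

theorem isUnit_iff_C {p : MvPolynomial σ K} :
    IsUnit p ↔ ∃ c : K, c ≠ 0 ∧ p = C c := by
  constructor
  · intro h
    have h0 := totalDegree_eq_zero_of_isUnit h
    refine ⟨coeff 0 p, ?_, eq_C_of_totalDegree_eq_zero h0⟩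
    intro hc
    rw [eq_C_of_totalDegree_eq_zero h0, hc, map_zero] at h
    exact h.ne_zero rfl
  · rintro ⟨c, hc, rfl⟩
    exact (isUnit_iff_ne_zero.mpr hc).map (C : K →+* MvPolynomial σ K)

theorem one_le_totalDegree_iff {p : MvPolynomial σ K} :
    (p ≠ 0 ∧ ¬ IsUnit p) ↔ 1 ≤ p.totalDegree := by
  constructor
  · rintro ⟨h0, hu⟩
    by_contra h
    push_neg at h
    interval_cases hd : p.totalDegree
    · have := eq_C_of_totalDegree_eq_zero hd
      apply hu
      rw [this]
      refine IsUnit.map (C : K →+* MvPolynomial σ K) (isUnit_iff_ne_zero.mpr ?_)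
      intro hc
      rw [hc, map_zero] at this
      exact h0 this
  · intro h
    constructor
    · intro h0; rw [h0] at h; simp at h
    · intro hu; have := totalDegree_eq_zero_of_isUnit hu; omega

theorem totalDegree_neg (p : MvPolynomial σ K) : (-p).totalDegree = p.totalDegree := by
  rw [totalDegree]; rw [totalDegree]; congr 1; exact support_neg _

theorem totalDegree_sub_le (p q : MvPolynomial σ K) :
    (p - q).totalDegree ≤ max p.totalDegree q.totalDegree := by
  have : p - q = p + (-q) := by ring
  rw [this]
  refine (totalDegree_add p (-q)).trans ?_
  have : (-q).totalDegree = q.totalDegree := by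
    rw [totalDegree]
    congr 1
    exact support_neg _
  omega

theorem totalDegree_sub_eq_left {p q : MvPolynomial σ K}
    (h : q.totalDegree < p.totalDegree) :
    (p - q).totalDegree = p.totalDegree := by
  have hneg : (-q).totalDegree = q.totalDegree := by
    rw [totalDegree]; congr 1; exact support_neg _
  have : p - q = p + (-q) := by ring
  rw [this, totalDegree_add_eq_left_of_totalDegree_lt]
  omega

theorem sub_ne_zero_of_totalDegree_lt {p q : MvPolynomial σ K} (hp : p ≠ 0)
    (h : q.totalDegree < p.totalDegree) : p - q ≠ 0 := by
  intro h0
  rw [sub_eq_zero] at h0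
  subst h0
  omega

end CohnAux

namespace CohnMat

open Matrix MvPolynomial

section Generic
variable {A : Type*} [CommRing A]

def Em (a : A) : Matrix (Fin 2) (Fin 2) A := !![a, 1; -1, 0]

def Dm (u v : A) : Matrix (Fin 2) (Fin 2) A := !![u, 0; 0, v]

def prodE (L : List A) : Matrix (Fin 2) (Fin 2) A := (L.map Em).prod

@[simp] lemma prodE_nil : prodE ([] : List A) = 1 := rfl

lemma prodE_cons (a : A) (L : List A) : prodE (a :: L) = Em a * prodE L := by
  simp [prodE]

lemma prodE_concat (L : List A) (c : A) : prodE (L ++ [c]) = prodE L * Em c := by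
  simp [prodE]

lemma Dm_one : Dm (1 : A) 1 = 1 := by
  rw [Dm, one_fin_two]

lemma Dm_mul_Dm (u v u' v' : A) : Dm u v * Dm u' v' = Dm (u * u') (v * v') := by
  ext i j
  fin_cases i <;> fin_cases j <;>
    simp [Em, Dm, Matrix.mul_apply, Fin.sum_univ_two]

lemma Em_mul_Dm {v vi : A} (h : v * vi = 1) (u a : A) :
    Em a * Dm u v = Dm v u * Em (a * u * vi) := by
  ext i j
  fin_cases i <;> fin_cases j <;>
    simp [Em, Dm, Matrix.mul_apply, Fin.sum_univ_two]
  linear_combination (-(a*u)) * h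

lemma rel_R0 (a b : A) : Em a * (Em 0 * Em b) = Dm (-1) (-1) * Em (a + b) := by
  ext i j
  fin_cases i <;> fin_cases j <;>
    simp [Em, Dm, Matrix.mul_apply, Fin.sum_univ_two] <;> ring

lemma rel_Ru {β βi : A} (h : β * βi = 1) (a b : A) :
    Em a * (Em β * Em b) = Dm βi β * (Em (β ^ 2 * a - β) * Em (b - βi)) := by
  ext i j
  fin_cases i <;> fin_cases j <;>
    simp [Em, Dm, Matrix.mul_apply, Fin.sum_univ_two]
  · linear_combination (a*β*βi - a*β*b + a + b - βi) * h
  · linear_combination (1 - a*β) * h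
  · linear_combination (-1 : A) * h

lemma E12_eq (f : A) : (!![1, f; 0, 1] : Matrix (Fin 2) (Fin 2) A) =
    Dm (-1) (-1) * (Em (-f) * (prodE [] * Em 0)) := by
  rw [prodE_nil, one_mul]
  ext i j
  fin_cases i <;> fin_cases j <;>
    simp [Em, Dm, Matrix.mul_apply, Fin.sum_univ_two]

lemma E21_eq (f : A) : (!![1, 0; f, 1] : Matrix (Fin 2) (Fin 2) A) =
    Dm (-1) (-1) * (Em 0 * (prodE [] * Em f)) := by
  rw [prodE_nil, one_mul]
  ext i j
  fin_cases i <;> fin_cases j <;>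
    simp [Em, Dm, Matrix.mul_apply, Fin.sum_univ_two]

end Generic

section Field

variable {K : Type*} [Field K]

local notation "R" => MvPolynomial (Fin 2) K

def GoodElt (c : R) : Prop := c ≠ 0 ∧ ¬ IsUnit c

def GoodList (L : List R) : Prop := ∀ c ∈ L, GoodElt c

lemma goodElt_iff {c : R} : GoodElt c ↔ 1 ≤ c.totalDegree :=
  CohnAux.one_le_totalDegree_iff

lemma totalDegree_unit_mul (w : Rˣ) (x : R) :
    ((w : R) * x).totalDegree = x.totalDegree := by
  by_cases hx : x = 0
  · simp [hx]
  · rw [CohnAux.totalDegree_mul_eq w.ne_zero hx,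
      CohnAux.totalDegree_eq_zero_of_isUnit w.isUnit, zero_add]

lemma goodElt_unit_mul (w : Rˣ) {x : R} (hx : GoodElt x) : GoodElt ((w : R) * x) := by
  rw [goodElt_iff] at hx ⊢
  rw [totalDegree_unit_mul]
  exact hx

lemma goodElt_ru {x β : R} (hx : GoodElt x) (hβ : IsUnit β) :
    GoodElt (β ^ 2 * x - β) := by
  have hβd : β.totalDegree = 0 := CohnAux.totalDegree_eq_zero_of_isUnit hβ
  have hβ2 : IsUnit (β ^ 2) := hβ.pow 2
  obtain ⟨w, hw⟩ := hβ2
  have hmain : (β ^ 2 * x).totalDegree = x.totalDegree := by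
    rw [← hw]; exact totalDegree_unit_mul w x
  rw [goodElt_iff] at hx ⊢
  rw [CohnAux.totalDegree_sub_eq_left (by omega : β.totalDegree < (β^2*x).totalDegree)]
  omega

lemma goodList_forall₂ {L L' : List R}
    (h : List.Forall₂ (fun x y => ∃ w : Rˣ, y = (w : R) * x) L L') :
    GoodList L → GoodList L' := by
  induction h with
  | nil => intro _ c hc; simp at hc
  | @cons x y l₁ l₂ hxy htail ih =>
    intro hL c hc
    rcases List.mem_cons.mp hc with rfl | hc
    · obtain ⟨w, rfl⟩ := hxy
      exact goodElt_unit_mul w (hL x List.mem_cons_self)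
    · exact ih (fun d hd => hL d (List.mem_cons_of_mem _ hd)) c hc

/-- push a diagonal matrix leftwards through a word. -/
lemma prodE_mul_Dm (L : List R) (u v : Rˣ) :
    ∃ (u' v' : Rˣ) (L' : List R),
      prodE L * Dm (u : R) v = Dm (u' : R) v' * prodE L' ∧
      List.Forall₂ (fun x y => ∃ w : Rˣ, y = (w : R) * x) L L' := by
  induction L with
  | nil => exact ⟨u, v, [], by simp, List.Forall₂.nil⟩
  | cons a L ih =>
    obtain ⟨u', v', L', hL', hf⟩ := ih
    refine ⟨v', u', (a * u' * ((v'⁻¹ : Rˣ) : R)) :: L', ?_, ?_⟩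
    · rw [prodE_cons, mul_assoc, hL', ← mul_assoc,
        Em_mul_Dm (v := (v' : R)) (vi := ((v'⁻¹ : Rˣ) : R)) (by exact_mod_cast v'.mul_inv) u' a,
        mul_assoc, ← prodE_cons]
    · exact List.Forall₂.cons ⟨u' * v'⁻¹, by push_cast; ring⟩ hf

/-- The normal-form predicate: `D·E(a₁)⋯E(aₙ)` with all interior letters
nonzero nonunits. -/
def NF (M : Matrix (Fin 2) (Fin 2) R) : Prop :=
  ∃ u v : Rˣ,
    M = Dm (u : R) v ∨
    (∃ a : R, M = Dm (u : R) v * Em a) ∨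
    (∃ (a b : R) (L : List R), GoodList L ∧
      M = Dm (u : R) v * (Em a * (prodE L * Em b)))

lemma NF_one : NF (1 : Matrix (Fin 2) (Fin 2) R) :=
  ⟨1, 1, Or.inl (by rw [Units.val_one, Dm_one])⟩

/-- absorb a diagonal sitting between the word `L` and a right factor `Y`. -/
lemma NF_absorb {u v u₀ v₀ : Rˣ} {a : R} {L : List R} (hL : GoodList L)
    (Y : Matrix (Fin 2) (Fin 2) R) :
    ∃ (u' v' : Rˣ) (a' : R) (L' : List R), GoodList L' ∧
      Dm (u : R) v * (Em a * (prodE L * (Dm (u₀ : R) v₀ * Y))) =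
        Dm (u' : R) v' * (Em a' * (prodE L' * Y)) := by
  obtain ⟨u₁, v₁, L', hL', hf⟩ := prodE_mul_Dm L u₀ v₀
  refine ⟨u * v₁, v * u₁, a * u₁ * ((v₁⁻¹ : Rˣ) : R), L', goodList_forall₂ hf hL, ?_⟩
  have h1 : prodE L * (Dm (u₀ : R) v₀ * Y) = (Dm (u₁ : R) v₁ * prodE L') * Y := by
    rw [← mul_assoc, hL']
  rw [h1]
  have h2 : Em a * (Dm (u₁ : R) v₁ * prodE L' * Y) =
      (Dm (v₁ : R) u₁ * Em (a * u₁ * ((v₁⁻¹ : Rˣ) : R))) * (prodE L' * Y) := by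
    rw [← Em_mul_Dm (by exact_mod_cast v₁.mul_inv) (u₁ : R) a]
    simp only [mul_assoc]
  rw [h2, ← mul_assoc, ← mul_assoc (Dm (u : R) ↑v), Dm_mul_Dm]
  simp only [Units.val_mul, mul_assoc]

lemma NF_mul_Dm {M : Matrix (Fin 2) (Fin 2) R} (hM : NF M) (u v : Rˣ) :
    NF (M * Dm (u : R) v) := by
  obtain ⟨u₀, v₀, h | ⟨a, h⟩ | ⟨a, b, L, hL, h⟩⟩ := hM
  · refine ⟨u₀ * u, v₀ * v, Or.inl ?_⟩
    rw [h, Dm_mul_Dm]; simp only [Units.val_mul]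
  · refine ⟨u₀ * v, v₀ * u, Or.inr (Or.inl ⟨a * u * ((v⁻¹ : Rˣ) : R), ?_⟩)⟩
    rw [h, mul_assoc, Em_mul_Dm (by exact_mod_cast v.mul_inv) (u : R) a, ← mul_assoc,
      Dm_mul_Dm]
    simp only [Units.val_mul]
  · rw [h, mul_assoc, mul_assoc, mul_assoc,
      Em_mul_Dm (by exact_mod_cast v.mul_inv) (u : R) b]
    obtain ⟨u', v', a', L', hL', he⟩ :=
      NF_absorb (u := u₀) (v := v₀) (u₀ := v) (v₀ := u) (a := a) hL
        (Em (b * u * ((v⁻¹ : Rˣ) : R)))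
    exact ⟨u', v', Or.inr (Or.inr ⟨a', _, L', hL', he⟩)⟩

lemma NF_mul_Em {M : Matrix (Fin 2) (Fin 2) R} (hM : NF M) (c : R) :
    NF (M * Em c) := by
  classical
  obtain ⟨u₀, v₀, h | ⟨a, h⟩ | ⟨a, b, L, hL, h⟩⟩ := hM
  · exact ⟨u₀, v₀, Or.inr (Or.inl ⟨c, by rw [h]⟩)⟩
  · refine ⟨u₀, v₀, Or.inr (Or.inr ⟨a, c, [], fun d hd => by simp at hd, ?_⟩)⟩
    rw [h, prodE_nil, one_mul, mul_assoc]
  · by_cases hb : GoodElt b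
    · refine ⟨u₀, v₀, Or.inr (Or.inr ⟨a, c, L ++ [b], ?_, ?_⟩)⟩
      · intro d hd
        rcases List.mem_append.mp hd with hd | hd
        · exact hL d hd
        · simp at hd; subst hd; exact hb
      · rw [h, prodE_concat]; simp only [mul_assoc]
    · have hb' : b = 0 ∨ IsUnit b := by
        by_cases h0 : b = 0
        · exact Or.inl h0
        · right; by_contra hu; exact hb ⟨h0, hu⟩
      rcases List.eq_nil_or_concat L with rfl | ⟨L₀, x, rfl⟩
      · -- L = [] : the letter before `b` is `a`
        rcases hb' with rfl | hbu
        · refine ⟨u₀ * (-1), v₀ * (-1), Or.inr (Or.inl ⟨a + c, ?_⟩)⟩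
          rw [h, prodE_nil, one_mul, mul_assoc, mul_assoc, rel_R0, ← mul_assoc, Dm_mul_Dm]
          simp only [Units.val_mul, Units.val_neg, Units.val_one]
        · obtain ⟨w, rfl⟩ := hbu
          refine ⟨u₀ * (w⁻¹ : Rˣ), v₀ * w,
            Or.inr (Or.inr ⟨(w : R) ^ 2 * a - w, c - ((w⁻¹ : Rˣ) : R), [],
              fun d hd => by simp at hd, ?_⟩)⟩
          rw [h, prodE_nil, one_mul, mul_assoc, mul_assoc,
            rel_Ru (by exact_mod_cast w.mul_inv) a c, ← mul_assoc, Dm_mul_Dm]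
          simp only [Units.val_mul, prodE_nil, one_mul]
      · -- L = L₀ ++ [x]
        rw [List.concat_eq_append] at h hL
        have hLx : GoodList L₀ := fun d hd => hL d (List.mem_append.mpr (Or.inl hd))
        have hx : GoodElt x := hL x (List.mem_append.mpr (Or.inr (by simp)))
        rcases hb' with rfl | hbu
        · have hrw : Dm (u₀ : R) v₀ * (Em a * (prodE (L₀ ++ [x]) * Em 0)) * Em c =
              Dm (u₀ : R) v₀ * (Em a * (prodE L₀ * (Dm (-1 : R) (-1) * Em (x + c)))) := by
            rw [prodE_concat, ← rel_R0]
            simp only [mul_assoc]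
          have habs := NF_absorb (u := u₀) (v := v₀) (u₀ := -1) (v₀ := -1) (a := a) hLx
            (Em (x + c))
          rw [Units.val_neg, Units.val_one] at habs
          obtain ⟨u', v', a', L', hL', he⟩ := habs
          exact ⟨u', v', Or.inr (Or.inr ⟨a', x + c, L', hL', by rw [h, hrw, he]⟩)⟩
        · obtain ⟨w, rfl⟩ := hbu
          have hrw : Dm (u₀ : R) v₀ * (Em a * (prodE (L₀ ++ [x]) * Em (w : R))) * Em c =
              Dm (u₀ : R) v₀ * (Em a * (prodE L₀ *
                (Dm (((w⁻¹ : Rˣ) : R)) (w : R) *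
                  (Em ((w : R) ^ 2 * x - w) * Em (c - ((w⁻¹ : Rˣ) : R)))))) := by
            rw [prodE_concat, ← rel_Ru (by exact_mod_cast w.mul_inv) x c]
            simp only [mul_assoc]
          have habs := NF_absorb (u := u₀) (v := v₀) (u₀ := w⁻¹) (v₀ := w) (a := a) hLx
            (Em ((w : R) ^ 2 * x - w) * Em (c - ((w⁻¹ : Rˣ) : R)))
          obtain ⟨u', v', a', L', hL', he⟩ := habs
          refine ⟨u', v', Or.inr (Or.inr ⟨a', c - ((w⁻¹ : Rˣ) : R),
            L' ++ [(w : R) ^ 2 * x - w], ?_, ?_⟩)⟩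
          · intro d hd
            rcases List.mem_append.mp hd with hd | hd
            · exact hL' d hd
            · simp at hd; subst hd; exact goodElt_ru hx w.isUnit
          · rw [h, hrw, he, prodE_concat]
            simp only [mul_assoc]

lemma NF_mul_prodE {M : Matrix (Fin 2) (Fin 2) R} (hM : NF M) (L : List R) :
    NF (M * prodE L) := by
  induction L generalizing M with
  | nil => simpa using hM
  | cons a L ih =>
    rw [prodE_cons, ← mul_assoc]
    exact ih (NF_mul_Em hM a)

lemma NF_mul {M N : Matrix (Fin 2) (Fin 2) R} (hM : NF M) (hN : NF N) :
    NF (M * N) := by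
  obtain ⟨u, v, h | ⟨a, h⟩ | ⟨a, b, L, hL, h⟩⟩ := hN
  · rw [h]; exact NF_mul_Dm hM u v
  · rw [h, ← mul_assoc]; exact NF_mul_Em (NF_mul_Dm hM u v) a
  · rw [h, ← mul_assoc, ← mul_assoc, ← mul_assoc]
    exact NF_mul_Em (NF_mul_prodE (NF_mul_Em (NF_mul_Dm hM u v) a) L) b

lemma NF_E12 (f : R) : NF (!![1, f; 0, 1] : Matrix (Fin 2) (Fin 2) R) := by
  refine ⟨-1, -1, Or.inr (Or.inr ⟨-f, 0, [], fun d hd => by simp at hd, ?_⟩)⟩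
  rw [Units.val_neg, Units.val_one]
  exact E12_eq f

lemma NF_E21 (f : R) : NF (!![1, 0; f, 1] : Matrix (Fin 2) (Fin 2) R) := by
  refine ⟨-1, -1, Or.inr (Or.inr ⟨0, f, [], fun d hd => by simp at hd, ?_⟩)⟩
  rw [Units.val_neg, Units.val_one]
  exact E21_eq f

end Field

end CohnMat

namespace CohnFinal

open Matrix MvPolynomial CohnMat

variable {K : Type*} [Field K]

local notation "R" => MvPolynomial (Fin 2) K

lemma word_entries : ∀ L : List R, GoodList L → L ≠ [] →
    prodE L 0 0 ≠ 0 ∧ (prodE L 0 1).totalDegree < (prodE L 0 0).totalDegree := by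
  intro L
  induction L using List.reverseRecOn with
  | nil => intro _ h; exact absurd rfl h
  | append_singleton L₀ c ih =>
    intro hG _
    have hc : GoodElt c := hG c (by simp)
    have hc1 : 1 ≤ c.totalDegree := goodElt_iff.mp hc
    have hc0 : c ≠ 0 := hc.1
    rcases eq_or_ne L₀ [] with rfl | hL₀
    · have h00 : prodE ([] ++ [c]) 0 0 = c := by simp [prodE, Em]
      have h01 : prodE ([] ++ [c]) 0 1 = 1 := by simp [prodE, Em]
      rw [h00, h01, totalDegree_one]
      exact ⟨hc0, by omega⟩
    · obtain ⟨h1, h2⟩ := ih (fun d hd => hG d (List.mem_append.mpr (Or.inl hd))) hL₀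
      have e0 : prodE (L₀ ++ [c]) 0 0 = prodE L₀ 0 0 * c - prodE L₀ 0 1 := by
        rw [prodE_concat]
        simp [Em, Matrix.mul_apply, Fin.sum_univ_two]
        ring
      have e1 : prodE (L₀ ++ [c]) 0 1 = prodE L₀ 0 0 := by
        rw [prodE_concat]
        simp [Em, Matrix.mul_apply, Fin.sum_univ_two]
      have hdmul : (prodE L₀ 0 0 * c).totalDegree
          = (prodE L₀ 0 0).totalDegree + c.totalDegree :=
        CohnAux.totalDegree_mul_eq h1 hc0
      have hlt : (prodE L₀ 0 1).totalDegree < (prodE L₀ 0 0 * c).totalDegree := by omega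
      rw [e0, e1]
      refine ⟨CohnAux.sub_ne_zero_of_totalDegree_lt (mul_ne_zero h1 hc0) hlt, ?_⟩
      rw [CohnAux.totalDegree_sub_eq_left hlt]
      omega

/-- the exponent `xy`. -/
noncomputable def mxy : Fin 2 →₀ ℕ := Finsupp.single 0 1 + Finsupp.single 1 1

lemma mxy_sum : ∑ i ∈ mxy.support, mxy i = 2 := by
  have h : (Finsupp.sum mxy fun _ e => e) = ∑ i ∈ mxy.support, mxy i := rfl
  rw [← h, Finsupp.sum_fintype _ _ (fun _ => rfl), Fin.sum_univ_two]
  simp [mxy, Finsupp.single_apply]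

lemma coeff_mxy_xy : coeff mxy (X 0 * X 1 : R) = 1 := by
  have h := coeff_X_mul (Finsupp.single (1 : Fin 2) 1) (0 : Fin 2) (X 1 : R)
  rw [coeff_X] at h
  rw [mxy]
  rw [if_pos rfl] at h
  exact h

lemma mxy_ne_zero : (mxy : Fin 2 →₀ ℕ) ≠ 0 := by
  intro h
  have := congrArg (fun f => f 0) h
  simp [mxy] at this

lemma coeff_mxy_one : coeff mxy (1 : R) = 0 := by
  rw [coeff_one, if_neg (fun h => mxy_ne_zero h.symm)]

lemma coeff_mxy_x2 : coeff mxy ((X 0 : R) ^ 2) = 0 := by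
  rw [X_pow_eq_monomial, coeff_monomial, if_neg]
  intro h
  have := congrArg (fun f => f 1) h
  simp [mxy] at this

lemma coeff_mxy_sub : coeff mxy (1 - X 0 * X 1 : R) = -1 := by
  rw [coeff_sub, coeff_mxy_one, coeff_mxy_xy]; ring

lemma one_sub_xy_ne : (1 - X 0 * X 1 : R) ≠ 0 := by
  intro h
  have := coeff_mxy_sub (K := K)
  rw [h, coeff_zero] at this
  simp at this

lemma deg_one_sub_xy : (1 - X 0 * X 1 : R).totalDegree = 2 := by
  refine le_antisymm ?_ ?_
  · refine (CohnAux.totalDegree_sub_le 1 (X 0 * X 1)).trans ?_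
    have h1 : (1 : R).totalDegree = 0 := totalDegree_one
    have h2 : (X 0 * X 1 : R).totalDegree ≤ 2 := by
      refine (totalDegree_mul _ _).trans ?_
      rw [totalDegree_X, totalDegree_X]
    omega
  · have hmem : mxy ∈ (1 - X 0 * X 1 : R).support := by
      rw [mem_support_iff, coeff_mxy_sub]
      exact neg_ne_zero.mpr one_ne_zero
    have := le_totalDegree hmem
    calc (2 : ℕ) = ∑ i ∈ mxy.support, mxy i := mxy_sum.symm
      _ ≤ _ := this

lemma xy_sub_one_ne : (X 0 * X 1 - 1 : R) ≠ 0 := by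
  intro h
  apply one_sub_xy_ne (K := K)
  have : (1 - X 0 * X 1 : R) = -(X 0 * X 1 - 1) := by ring
  rw [this, h, neg_zero]

lemma deg_xy_sub_one : (X 0 * X 1 - 1 : R).totalDegree = 2 := by
  have : (X 0 * X 1 - 1 : R) = -(1 - X 0 * X 1) := by ring
  rw [this, CohnAux.totalDegree_neg, deg_one_sub_xy]

lemma x2_ne : ((X 0 : R) ^ 2) ≠ 0 := pow_ne_zero _ (X_ne_zero _)

lemma deg_x2 : ((X 0 : R) ^ 2).totalDegree = 2 := totalDegree_X_pow _ _

end CohnFinal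

namespace CohnFinal
open Matrix MvPolynomial CohnMat
variable {K : Type*} [Field K]
local notation "R" => MvPolynomial (Fin 2) K

lemma not_NF_Cmat :
    ¬ NF (!![1 + X 0 * X 1, -(X 1) ^ 2; (X 0) ^ 2, 1 - X 0 * X 1] :
      Matrix (Fin 2) (Fin 2) R) := by
  rintro ⟨u, v, hcase⟩
  obtain ⟨γ, hγ0, hγ⟩ := CohnAux.isUnit_iff_C.mp v.isUnit
  have hγi0 : (γ⁻¹ : K) ≠ 0 := inv_ne_zero hγ0
  have hCγi0 : (C γ⁻¹ : R) ≠ 0 := by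
    intro h0
    apply hγi0
    have := congrArg (coeff 0) h0
    simpa using this
  have hCγi : (C (γ⁻¹) : R) * C γ = 1 := by
    rw [← C_mul, inv_mul_cancel₀ hγ0, C_1]
  rcases hcase with h | ⟨a, h⟩ | ⟨a, b, L, hGL, h⟩
  · have e := congrArg (fun M => M 1 0) h
    simp [Dm] at e
  · have e := congrArg (fun M => M 1 1) h
    simp [Dm, Em, Matrix.mul_apply, Fin.sum_univ_two] at e
    exact one_sub_xy_ne (K := K) e
  · rcases List.eq_nil_or_concat L with rfl | ⟨L₀, xx, rfl⟩
    · have e := congrArg (fun M => M 1 1) h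
      simp [Dm, Em, Matrix.mul_apply, Fin.sum_univ_two] at e
      rw [hγ] at e
      have e' : (1 - X 0 * X 1 : R) = C (-γ) := by rw [map_neg]; exact e
      have hdeg := congrArg totalDegree e'
      rw [deg_one_sub_xy, totalDegree_C] at hdeg
      omega
    · rw [List.concat_eq_append] at hGL
      have e1 := congrArg (fun M => M 1 1) h
      have e2 := congrArg (fun M => M 1 0) h
      simp only [List.concat_eq_append] at e1 e2
      simp [Dm, Em, Matrix.mul_apply, Fin.sum_univ_two, Matrix.vecMul,
        dotProduct, Matrix.vecHead] at e1 e2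
      rw [hγ] at e1 e2
      obtain ⟨hp0, hqlt⟩ := word_entries (L₀ ++ [xx]) hGL (by simp)
      set p := prodE (L₀ ++ [xx]) 0 0 with hpdefn
      set q := prodE (L₀ ++ [xx]) 0 1 with hqdefn
      have hpdef : p = C γ⁻¹ * (X 0 * X 1 - 1) := by
        linear_combination (C (γ⁻¹ : K) : R) * e1 + (- p) * hCγi
      have hkey : q = p * b + C γ⁻¹ * X 0 ^ 2 := by
        linear_combination (-(C (γ⁻¹ : K) : R)) * e2 + (p * b - q) * hCγi
      have hdegp : p.totalDegree = 2 := by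
        rw [hpdef, CohnAux.totalDegree_mul_eq hCγi0 xy_sub_one_ne, totalDegree_C,
          deg_xy_sub_one]
      have hdegq : q.totalDegree ≤ 1 := by omega
      have hdcx : (C (γ⁻¹ : K) * X 0 ^ 2 : R).totalDegree = 2 := by
        rw [CohnAux.totalDegree_mul_eq hCγi0 x2_ne, totalDegree_C, deg_x2]
      by_cases hbdeg : b.totalDegree = 0
      · have hbC := CohnAux.eq_C_of_totalDegree_eq_zero hbdeg
        by_cases hβ : coeff 0 b = 0
        · have hb0 : b = 0 := by rw [hbC, hβ, map_zero]
          have hq2 : q = C γ⁻¹ * X 0 ^ 2 := by rw [hkey, hb0, mul_zero, zero_add]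
          rw [← hq2] at hdcx
          omega
        · have hco := congrArg (coeff mxy) hkey
          rw [coeff_add] at hco
          have h1 : coeff mxy q = 0 := by
            apply coeff_eq_zero_of_totalDegree_lt
            rw [mxy_sum]
            omega
          have hcp : coeff mxy p = γ⁻¹ := by
            rw [hpdef, coeff_C_mul, coeff_sub, coeff_mxy_xy, coeff_mxy_one]
            ring
          have hcpb : coeff mxy (p * b) = coeff 0 b * γ⁻¹ := by
            rw [hbC, mul_comm, coeff_C_mul]
            rw [← hbC, hcp]
          have hcx : coeff mxy (C (γ⁻¹ : K) * X 0 ^ 2 : R) = 0 := by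
            rw [coeff_C_mul, coeff_mxy_x2, mul_zero]
          rw [h1, hcpb, hcx, add_zero] at hco
          rcases mul_eq_zero.mp hco.symm with h' | h'
          · exact hβ h'
          · exact hγi0 h'
      · have hb1 : 1 ≤ b.totalDegree := by omega
        have hbne : b ≠ 0 := by
          intro h0
          rw [h0, totalDegree_zero] at hb1
          omega
        have hsub : p * b = q - C γ⁻¹ * X 0 ^ 2 := by linear_combination -hkey
        have hd1 : (p * b).totalDegree = 2 + b.totalDegree := by
          rw [CohnAux.totalDegree_mul_eq hp0 hbne, hdegp]
        have hd2 := CohnAux.totalDegree_sub_le q (C (γ⁻¹ : K) * X 0 ^ 2)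
        rw [hdcx] at hd2
        have hmax : max q.totalDegree (2 : ℕ) ≤ 2 := max_le (by omega) (by omega)
        rw [hsub] at hd1
        omega

lemma E2_NF (U : GL (Fin 2) R) (hU : U ∈ E2 (MvPolynomial (Fin 2) K)) :
    NF ((U : Matrix (Fin 2) (Fin 2) R)) := by
  have h2 : U ∈ (Subgroup.closure (elemSet (MvPolynomial (Fin 2) K))).toSubmonoid := hU
  rw [Subgroup.closure_toSubmonoid] at h2
  refine Submonoid.closure_induction
    (motive := fun (x : GL (Fin 2) R) _ => NF ((x : Matrix (Fin 2) (Fin 2) R))) ?_ ?_ ?_ h2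
  · rintro g (hg | hg)
    · obtain ⟨a, ha | ha⟩ := hg
      · rw [ha]; exact NF_E12 a
      · rw [ha]; exact NF_E21 a
    · have hginv : g⁻¹ ∈ elemSet (MvPolynomial (Fin 2) K) := hg
      obtain ⟨a, ha | ha⟩ := hginv
      · have hkey : (g : Matrix (Fin 2) (Fin 2) R) = !![1, -a; 0, 1] := by
          have h1 : (g : Matrix (Fin 2) (Fin 2) R) * ((g⁻¹ : GL (Fin 2) R) :
              Matrix (Fin 2) (Fin 2) R) = 1 := by
            rw [← Units.val_mul, mul_inv_cancel, Units.val_one]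
          rw [ha] at h1
          have h2' : (!![1, a; 0, 1] : Matrix (Fin 2) (Fin 2) R) * !![1, -a; 0, 1] = 1 := by
            ext i j
            fin_cases i <;> fin_cases j <;>
              simp [Matrix.mul_apply, Fin.sum_univ_two]
          calc (g : Matrix (Fin 2) (Fin 2) R)
              = (g : Matrix (Fin 2) (Fin 2) R) * (!![1, a; 0, 1] * !![1, -a; 0, 1]) := by
                rw [h2', mul_one]
            _ = ((g : Matrix (Fin 2) (Fin 2) R) * !![1, a; 0, 1]) * !![1, -a; 0, 1] := by
                rw [mul_assoc]
            _ = !![1, -a; 0, 1] := by rw [h1, one_mul]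
        rw [hkey]; exact NF_E12 (-a)
      · have hkey : (g : Matrix (Fin 2) (Fin 2) R) = !![1, 0; -a, 1] := by
          have h1 : (g : Matrix (Fin 2) (Fin 2) R) * ((g⁻¹ : GL (Fin 2) R) :
              Matrix (Fin 2) (Fin 2) R) = 1 := by
            rw [← Units.val_mul, mul_inv_cancel, Units.val_one]
          rw [ha] at h1
          have h2' : (!![1, 0; a, 1] : Matrix (Fin 2) (Fin 2) R) * !![1, 0; -a, 1] = 1 := by
            ext i j
            fin_cases i <;> fin_cases j <;>
              simp [Matrix.mul_apply, Fin.sum_univ_two]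
          calc (g : Matrix (Fin 2) (Fin 2) R)
              = (g : Matrix (Fin 2) (Fin 2) R) * (!![1, 0; a, 1] * !![1, 0; -a, 1]) := by
                rw [h2', mul_one]
            _ = ((g : Matrix (Fin 2) (Fin 2) R) * !![1, 0; a, 1]) * !![1, 0; -a, 1] := by
                rw [mul_assoc]
            _ = !![1, 0; -a, 1] := by rw [h1, one_mul]
        rw [hkey]; exact NF_E21 (-a)
  · exact NF_one
  · intro x y _ _ hx hy
    rw [Units.val_mul]
    exact NF_mul hx hy

end CohnFinal

/-- The product matrix `[[1,0],[−x²,1]] · [[1+xy, −y²],[x², 1−xy]]` over `k[x,y]`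
is invertible (lies in `GL₂(k[x,y])`) but does not lie in `E₂(k[x,y])`. -/
theorem product_matrix_not_in_E2 (k : Type*) [Field k] :
    IsUnit ((!![1, 0; -(X 0) ^ 2, 1] *
        !![1 + X 0 * X 1, -(X 1) ^ 2; (X 0) ^ 2, 1 - X 0 * X 1] :
        Matrix (Fin 2) (Fin 2) (MvPolynomial (Fin 2) k))) ∧
    ∀ U : GL (Fin 2) (MvPolynomial (Fin 2) k),
      (U : Matrix (Fin 2) (Fin 2) (MvPolynomial (Fin 2) k)) =
        !![1, 0; -(X 0) ^ 2, 1] *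
          !![1 + X 0 * X 1, -(X 1) ^ 2; (X 0) ^ 2, 1 - X 0 * X 1] →
      U ∉ E2 (MvPolynomial (Fin 2) k) := by
  constructor
  · rw [Matrix.isUnit_iff_isUnit_det, Matrix.det_mul, Matrix.det_fin_two_of,
      Matrix.det_fin_two_of]
    have : ((1 : MvPolynomial (Fin 2) k) * 1 - 0 * -X 0 ^ 2) *
        ((1 + X 0 * X 1) * (1 - X 0 * X 1) - -X 1 ^ 2 * X 0 ^ 2) = 1 := by ring
    rw [this]
    exact isUnit_one
  · intro U hU hmem
    -- the elementary matrix E₂₁(x²) as an element of GL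
    have hinv : (!![1, 0; (X 0 : MvPolynomial (Fin 2) k) ^ 2, 1]) *
        !![1, 0; -(X 0) ^ 2, 1] = 1 := by
      ext i j
      fin_cases i <;> fin_cases j <;>
        simp [Matrix.mul_apply, Fin.sum_univ_two]
    have hinv' : (!![1, 0; -(X 0 : MvPolynomial (Fin 2) k) ^ 2, 1]) *
        !![1, 0; (X 0) ^ 2, 1] = 1 := by
      ext i j
      fin_cases i <;> fin_cases j <;>
        simp [Matrix.mul_apply, Fin.sum_univ_two]
    let g : GL (Fin 2) (MvPolynomial (Fin 2) k) :=
      ⟨!![1, 0; (X 0) ^ 2, 1], !![1, 0; -(X 0) ^ 2, 1], hinv, hinv'⟩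
    have hg : g ∈ E2 (MvPolynomial (Fin 2) k) :=
      Subgroup.subset_closure ⟨(X 0) ^ 2, Or.inr rfl⟩
    have hgU : g * U ∈ E2 (MvPolynomial (Fin 2) k) := mul_mem hg hmem
    have hNF := CohnFinal.E2_NF (g * U) hgU
    have hcoe : ((g * U : GL (Fin 2) (MvPolynomial (Fin 2) k)) :
        Matrix (Fin 2) (Fin 2) (MvPolynomial (Fin 2) k)) =
        !![1 + X 0 * X 1, -(X 1) ^ 2; (X 0) ^ 2, 1 - X 0 * X 1] := by
      rw [Units.val_mul, hU, ← mul_assoc]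
      show !![1, 0; (X 0) ^ 2, 1] * !![1, 0; -(X 0) ^ 2, 1] * _ = _
      rw [hinv, one_mul]
    rw [hcoe] at hNF
    exact CohnFinal.not_NF_Cmat hNF
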